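/- Let D = (V, Λ) be a strongly connected digraph containing a strongly reversible directed path P from u to v (i.e., d⁻(u) < d⁻(v) − 1 and u two-reaches v). Then the digraph obtained from D by reversing every arc of P is strongly connected and its indegree sequence is strictly smaller in lexicographic order than that of D. -/

import Mathlib

/-- The list of arcs (consecutive pairs) of a list of vertices. -/
def listArcs {V : Type*} (p : List V) : List (V × V) := p.zip p.tail

/-- `p` is a directed path from `u` to `v` in the digraph with arc set `A`. -/
def IsDipath {V : Type*} (A : Finset (V × V)) (u v : V) (p : List V) : Prop :=
  p ≠ [] ∧ p.head? = some u ∧ p.getLast? = some v ∧ p.Nodup ∧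
    p.Chain' (fun a b => (a, b) ∈ A)

/-- Two paths (given as vertex lists) are arc-disjoint. -/
def ArcDisjoint {V : Type*} (p q : List V) : Prop :=
  ∀ e ∈ listArcs p, e ∉ listArcs q

/-- `u` reaches `v`: there is a directed path from `u` to `v`. -/
def Reaches {V : Type*} (A : Finset (V × V)) (u v : V) : Prop :=
  ∃ p, IsDipath A u v p

/-- `u` two-reaches `v`: there are two arc-disjoint directed paths from `u` to `v`. -/
def TwoReaches {V : Type*} (A : Finset (V × V)) (u v : V) : Prop :=
  ∃ p q, IsDipath A u v p ∧ IsDipath A u v q ∧ ArcDisjoint p q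

/-- A digraph is strongly connected if every vertex reaches every other vertex. -/
def StronglyConnected {V : Type*} (A : Finset (V × V)) : Prop :=
  ∀ u v : V, Reaches A u v

/-- The digraph obtained by reversing every arc of the path `p`. -/
def reverseAlong {V : Type*} [DecidableEq V] (A : Finset (V × V)) (p : List V) :
    Finset (V × V) :=
  (A \ (listArcs p).toFinset) ∪ ((listArcs p).map Prod.swap).toFinset

/-- The indegree of a vertex in the digraph with arc set `A`. -/
def inDeg {V : Type*} [DecidableEq V] (A : Finset (V × V)) (v : V) : ℕ :=
  (A.filter (fun e => e.2 = v)).card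

/-- The indegree sequence: the indegrees of all vertices in non-increasing order. -/
def degSeq (V : Type*) [Fintype V] [DecidableEq V] (A : Finset (V × V)) : List ℕ :=
  ((Finset.univ.val.map (inDeg A)).sort (· ≤ ·)).reverse

/-- `A` is an orientation of the simple graph `G`: every edge of `G` gets exactly one
direction, and every arc of `A` comes from an edge of `G`. -/
def IsOrientation {V : Type*} (G : SimpleGraph V) (A : Finset (V × V)) : Prop :=
  (∀ a b : V, G.Adj a b ↔ ((a, b) ∈ A ∨ (b, a) ∈ A)) ∧
    ∀ a b : V, ¬((a, b) ∈ A ∧ (b, a) ∈ A)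

/-- The underlying undirected simple graph of a digraph. -/
def underlying {V : Type*} (A : Finset (V × V)) : SimpleGraph V :=
  SimpleGraph.fromRel (fun a b => (a, b) ∈ A)

/-- `p` is a directed path from `u` to `v` all of whose vertices lie in `S`. -/
def IsDipathIn {V : Type*} (A : Finset (V × V)) (S : Set V) (u v : V) (p : List V) : Prop :=
  IsDipath A u v p ∧ ∀ x ∈ p, x ∈ S

/-- `u` reaches `v` within the induced subdigraph on `S`. -/
def ReachesWithin {V : Type*} (A : Finset (V × V)) (S : Set V) (u v : V) : Prop :=
  ∃ p, IsDipathIn A S u v p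

/-!
After reversing `p`, the vertices reachable from `u` are closed backwards along `p`, so at
most one arc of `p` leaves them, and every arc of `A` leaving them lies on `p`. Two
arc-disjoint paths from `u` to `v` therefore cannot both leave them: `v` stays reachable from
`u`. Each reversed arc `ab` of `p` is then replaced by the walk `a ⇝ u ⇝ v ⇝ b` running along
the reversed path, so strong connectivity survives.

Only `u` can gain indegree (at most one), `v` loses at least one, and no other indegree grows.
As `d⁻(u) + 1 < d⁻(v)`, the potential `∑ w, B ^ d⁻(w)` with `B = |V| + 1` strictly decreases,
and on non-increasing sequences of length less than `B` this potential refines the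
lexicographic order.
-/

section

variable {V : Type*}

theorem mem_listArcs_iff {l : List V} {a b : V} :
    (a, b) ∈ listArcs l ↔ ∃ i, ∃ h : i + 1 < l.length, l[i] = a ∧ l[i + 1] = b := by
  simp only [listArcs, List.mem_iff_getElem, List.getElem_zip, List.getElem_tail,
    List.length_zip, List.length_tail, Prod.mk.injEq]
  exact ⟨fun ⟨i, hi, h⟩ => ⟨i, by omega, h⟩, fun ⟨i, hi, h⟩ => ⟨i, by omega, h⟩⟩

theorem isChain_iff_forall_mem_listArcs {R : V → V → Prop} {l : List V} :
    l.IsChain R ↔ ∀ a b, (a, b) ∈ listArcs l → R a b := by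
  simp only [List.isChain_iff_getElem, mem_listArcs_iff]
  constructor
  · rintro h _ _ ⟨i, hi, rfl, rfl⟩
    exact h i hi
  · exact fun h i hi => h _ _ ⟨i, hi, rfl, rfl⟩

theorem List.IsChain.reflTransGen_getElem {R : V → V → Prop} {l : List V} (hl : l.IsChain R)
    {i j : ℕ} (hij : i ≤ j) (hj : j < l.length) :
    Relation.ReflTransGen R l[i] l[j] := by
  induction j, hij using Nat.le_induction with
  | base => exact .refl
  | succ j hij ih => exact (ih (by omega)).tail (hl.getElem j hj)

theorem eq_of_mem_listArcs_of_mem_listArcs {l : List V} (hl : l.Nodup) {a b c : V}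
    (hb : (a, b) ∈ listArcs l) (hc : (a, c) ∈ listArcs l) : b = c := by
  obtain ⟨i, hi, hia, rfl⟩ := mem_listArcs_iff.1 hb
  obtain ⟨j, hj, rfl, rfl⟩ := mem_listArcs_iff.1 hc
  obtain rfl : i = j := hl.getElem_inj_iff.1 hia
  rfl

theorem notMem_listArcs_of_getLast? {l : List V} (hl : l.Nodup) {v : V}
    (hv : l.getLast? = some v) (b : V) : (v, b) ∉ listArcs l := by
  rintro h
  obtain ⟨i, hi, hiv, -⟩ := mem_listArcs_iff.1 h
  rw [List.getLast?_eq_getElem?, List.getElem?_eq_some_iff] at hv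
  obtain ⟨hlen, hv⟩ := hv
  have := hl.getElem_inj_iff.1 (hiv.trans hv.symm)
  omega

theorem exists_mem_listArcs_of_mem {l : List V} {w : V} (hw : w ∈ l)
    (hhead : l.head? ≠ some w) : ∃ a, (a, w) ∈ listArcs l := by
  obtain ⟨j, hj, rfl⟩ := List.mem_iff_getElem.1 hw
  obtain ⟨i, rfl⟩ : ∃ i, j = i + 1 := by
    refine Nat.exists_eq_add_one.2 (Nat.pos_of_ne_zero ?_)
    rintro rfl
    exact hhead (by simp [List.head?_eq_getElem?])
  exact ⟨l[i], mem_listArcs_iff.2 ⟨i, hj, rfl, rfl⟩⟩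

theorem listArcs_leaving_unique {Q : V → Prop} {l : List V}
    (hQ : ∀ a b, (a, b) ∈ listArcs l → Q b → Q a) {a b c d : V}
    (hab : (a, b) ∈ listArcs l) (hcd : (c, d) ∈ listArcs l)
    (ha : Q a) (hb : ¬ Q b) (hc : Q c) (hd : ¬ Q d) : (a, b) = (c, d) := by
  have hchain := isChain_iff_forall_mem_listArcs.2 hQ
  have back : ∀ x y, Relation.ReflTransGen (fun a b => Q b → Q a) x y → Q y → Q x := by
    intro x y hxy hy
    induction hxy with
    | refl => exact hy
    | tail _ hyz ih => exact ih (hyz hy)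
  have key : ∀ i j (hij : i ≤ j) (hj : j < l.length), Q l[j] → Q l[i] :=
    fun i j hij hj => back _ _ (hchain.reflTransGen_getElem hij hj)
  obtain ⟨i, hi, rfl, rfl⟩ := mem_listArcs_iff.1 hab
  obtain ⟨j, hj, rfl, rfl⟩ := mem_listArcs_iff.1 hcd
  obtain hij | rfl | hji := lt_trichotomy i j
  · exact absurd (key (i + 1) j hij (by omega) hc) hb
  · rfl
  · exact absurd (key (j + 1) i hji (by omega) ha) hd

theorem exists_mem_listArcs_leaving {Q : V → Prop} {l : List V} {u w : V}
    (hhead : l.head? = some u) (hu : Q u) (hw : w ∈ l) (hQw : ¬ Q w) :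
    ∃ a b, (a, b) ∈ listArcs l ∧ Q a ∧ ¬ Q b := by
  by_contra! hstays
  obtain ⟨l, rfl⟩ := List.head?_eq_some_iff.1 hhead
  have hchain : (u :: l).IsChain (fun a b => Q a → Q b) :=
    isChain_iff_forall_mem_listArcs.2 hstays
  exact hQw (hchain.induction _ _ (fun _ _ hab ha => hab ha) (fun _ => hu) w hw)

section Reachability

variable {A : Finset (V × V)} {u v : V}

theorem IsDipath.reflTransGen {p : List V} (hp : IsDipath A u v p) :
    Relation.ReflTransGen (fun a b => (a, b) ∈ A) u v := by
  obtain ⟨-, hhead, hlast, -, hchain⟩ := hp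
  obtain ⟨l, rfl⟩ := List.head?_eq_some_iff.1 hhead
  refine List.relationReflTransGen_of_exists_isChain_cons l hchain ?_
  exact Option.some_injective _ ((List.getLast?_eq_some_getLast _).symm.trans hlast)

theorem IsDipath.mem_of_mem_listArcs {p : List V} (hp : IsDipath A u v p) ⦃e : V × V⦄
    (he : e ∈ listArcs p) : e ∈ A :=
  isChain_iff_forall_mem_listArcs.1 hp.2.2.2.2 e.1 e.2 he

theorem Reaches.of_reflTransGen (h : Relation.ReflTransGen (fun a b => (a, b) ∈ A) u v) :
    Reaches A u v := by
  induction h using Relation.ReflTransGen.head_induction_on with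
  | refl => exact ⟨[v], List.cons_ne_nil _ _, rfl, rfl, List.nodup_singleton _, .singleton _⟩
  | @head a c hac _ ih =>
    obtain ⟨q, -, hhead, hlast, hnodup, hchain⟩ := ih
    by_cases haq : a ∈ q
    -- a walk need not be a path: drop the part of `q` before `a`
    · obtain ⟨s, t, rfl⟩ := List.append_of_mem haq
      refine ⟨a :: t, List.cons_ne_nil _ _, rfl, ?_, hnodup.sublist (List.sublist_append_right _ _),
        (List.isChain_append.1 hchain).2.1⟩
      rwa [List.getLast?_append_of_ne_nil _ (List.cons_ne_nil _ _)] at hlast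
    · obtain ⟨t, rfl⟩ := List.head?_eq_some_iff.1 hhead
      refine ⟨a :: c :: t, List.cons_ne_nil _ _, rfl, ?_, List.nodup_cons.2 ⟨haq, hnodup⟩,
        List.isChain_cons_cons.2 ⟨hac, hchain⟩⟩
      rwa [List.getLast?_cons_cons]

theorem reaches_iff_reflTransGen :
    Reaches A u v ↔ Relation.ReflTransGen (fun a b => (a, b) ∈ A) u v :=
  ⟨fun ⟨_, hp⟩ => hp.reflTransGen, Reaches.of_reflTransGen⟩

end Reachability

section Reversal

variable [DecidableEq V] {A : Finset (V × V)} {u v : V} {p : List V}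

theorem mem_reverseAlong_of_mem_listArcs {a b : V} (h : (a, b) ∈ listArcs p) :
    (b, a) ∈ reverseAlong A p :=
  Finset.mem_union_right _ (List.mem_toFinset.2 (List.mem_map.2 ⟨(a, b), h, rfl⟩))

theorem mem_listArcs_of_notMem_reverseAlong {e : V × V} (he : e ∈ A)
    (h : e ∉ reverseAlong A p) : e ∈ listArcs p := by
  by_contra hp
  exact h (Finset.mem_union_left _ (Finset.mem_sdiff.2 ⟨he, mt List.mem_toFinset.1 hp⟩))

theorem TwoReaches.reflTransGen_reverseAlong (h2 : TwoReaches A u v) :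
    Relation.ReflTransGen (fun a b => (a, b) ∈ reverseAlong A p) u v := by
  set Q := Relation.ReflTransGen (fun a b => (a, b) ∈ reverseAlong A p) u
  by_contra hv
  have leaving : ∀ q, IsDipath A u v q → ∃ a b, (a, b) ∈ listArcs q ∧ (a, b) ∈ listArcs p ∧
      Q a ∧ ¬ Q b := by
    intro q hq
    obtain ⟨a, b, hab, ha, hb⟩ :=
      exists_mem_listArcs_leaving hq.2.1 .refl (List.mem_of_mem_getLast? hq.2.2.1) hv
    refine ⟨a, b, hab, ?_, ha, hb⟩
    exact mem_listArcs_of_notMem_reverseAlong (hq.mem_of_mem_listArcs hab) fun h => hb (ha.tail h)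
  obtain ⟨q₁, q₂, hq₁, hq₂, hdisj⟩ := h2
  obtain ⟨a, b, habq, habp, ha, hb⟩ := leaving q₁ hq₁
  obtain ⟨c, d, hcdq, hcdp, hc, hd⟩ := leaving q₂ hq₂
  have hback : ∀ x y, (x, y) ∈ listArcs p → Q y → Q x :=
    fun x y hxy hy => hy.tail (mem_reverseAlong_of_mem_listArcs hxy)
  rw [listArcs_leaving_unique hback habp hcdp ha hb hc hd] at habq
  exact hdisj _ habq hcdq

theorem stronglyConnected_reverseAlong (hsc : StronglyConnected A) (hhead : p.head? = some u)
    (hlast : p.getLast? = some v) (h2 : TwoReaches A u v) :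
    StronglyConnected (reverseAlong A p) := by
  set R := fun a b => (a, b) ∈ reverseAlong A p
  have hrev : p.IsChain (fun a b => R b a) :=
    isChain_iff_forall_mem_listArcs.2 fun _ _ => mem_reverseAlong_of_mem_listArcs
  have to_u : ∀ x ∈ p, Relation.ReflTransGen R x u := by
    obtain ⟨t, rfl⟩ := List.head?_eq_some_iff.1 hhead
    exact hrev.induction _ _ (fun _ _ hyx hx => hx.head hyx) (fun _ => .refl)
  have from_v : ∀ x ∈ p, Relation.ReflTransGen R v x := by
    refine hrev.backwards_induction _ _ (fun _ _ hyx hy => hy.tail hyx) fun hne => ?_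
    rw [Option.some_injective _ ((List.getLast?_eq_some_getLast hne).symm.trans hlast)]
  have arc : ∀ a b, (a, b) ∈ A → Relation.ReflTransGen R a b := by
    intro a b hab
    by_cases h : (a, b) ∈ reverseAlong A p
    · exact .single h
    · obtain ⟨i, hi, rfl, rfl⟩ := mem_listArcs_iff.1 (mem_listArcs_of_notMem_reverseAlong hab h)
      exact ((to_u _ (List.getElem_mem _)).trans h2.reflTransGen_reverseAlong).trans
        (from_v _ (List.getElem_mem _))
  exact fun x y => .of_reflTransGen
    (Relation.reflTransGen_closed arc _ _ (reaches_iff_reflTransGen.1 (hsc x y)))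

end Reversal

section Indegree

variable [DecidableEq V] {A : Finset (V × V)} {u v : V} {p : List V}

theorem inDeg_reverseAlong_add_le (hpA : ∀ ⦃e⦄, e ∈ listArcs p → e ∈ A) (w : V) :
    inDeg (reverseAlong A p) w + ((listArcs p).toFinset.filter (·.2 = w)).card ≤
      inDeg A w + ((listArcs p).toFinset.filter (·.1 = w)).card := by
  set P := (listArcs p).toFinset
  set S := ((listArcs p).map Prod.swap).toFinset
  have hsdiff : ((A \ P).filter (·.2 = w)).card + (P.filter (·.2 = w)).card = inDeg A w := by
    have : (A \ P).filter (·.2 = w) = A.filter (·.2 = w) \ P.filter (·.2 = w) := by grind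
    rw [inDeg, this, Finset.card_sdiff_add_card_eq_card
      (Finset.filter_subset_filter _ fun _ he => hpA (List.mem_toFinset.1 he))]
  have hswap : (S.filter (·.2 = w)).card ≤ (P.filter (·.1 = w)).card := by
    refine Finset.card_le_card_of_injOn Prod.swap ?_ Prod.swap_injective.injOn
    intro e he
    simp only [S, P, Finset.coe_filter, List.mem_toFinset, List.mem_map] at he ⊢
    obtain ⟨⟨f, hf, rfl⟩, rfl⟩ := he
    exact ⟨hf, rfl⟩
  calc inDeg (reverseAlong A p) w + (P.filter (·.2 = w)).card
      ≤ ((A \ P).filter (·.2 = w)).card + (S.filter (·.2 = w)).card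
          + (P.filter (·.2 = w)).card := by
        rw [inDeg, reverseAlong, Finset.filter_union]
        gcongr
        exact Finset.card_union_le _ _
    _ = inDeg A w + (S.filter (·.2 = w)).card := by rw [add_right_comm, hsdiff]
    _ ≤ inDeg A w + (P.filter (·.1 = w)).card := by gcongr

theorem card_filter_listArcs_fst_le_one (hp : p.Nodup) (w : V) :
    ((listArcs p).toFinset.filter (·.1 = w)).card ≤ 1 := by
  refine Finset.card_le_one.2 fun ⟨a, b⟩ hab ⟨c, d⟩ hcd => ?_
  simp only [Finset.mem_filter, List.mem_toFinset] at hab hcd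
  obtain ⟨hab, rfl⟩ := hab
  obtain ⟨hcd, rfl⟩ := hcd
  rw [eq_of_mem_listArcs_of_mem_listArcs hp hab hcd]

theorem card_filter_listArcs_fst_le_snd (hp : p.Nodup) {w : V} (hw : p.head? ≠ some w) :
    ((listArcs p).toFinset.filter (·.1 = w)).card ≤
      ((listArcs p).toFinset.filter (·.2 = w)).card := by
  obtain hout | ⟨⟨a, b⟩, hab⟩ := ((listArcs p).toFinset.filter (·.1 = w)).eq_empty_or_nonempty
  · simp [hout]
  simp only [Finset.mem_filter, List.mem_toFinset] at hab
  obtain ⟨hab, rfl⟩ := hab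
  obtain ⟨c, hc⟩ := exists_mem_listArcs_of_mem (List.of_mem_zip hab).1 hw
  refine (card_filter_listArcs_fst_le_one hp a).trans (Finset.card_pos.2 ⟨(c, a), ?_⟩)
  simpa using hc

theorem IsDipath.inDeg_reverseAlong_le (hp : IsDipath A u v p) {w : V} (hw : w ≠ u) :
    inDeg (reverseAlong A p) w ≤ inDeg A w := by
  have := inDeg_reverseAlong_add_le hp.mem_of_mem_listArcs w
  have := card_filter_listArcs_fst_le_snd hp.2.2.2.1 (w := w)
    (by rw [hp.2.1]; exact (Option.some_injective _).ne hw.symm)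
  omega

theorem IsDipath.inDeg_reverseAlong_le_add_one (hp : IsDipath A u v p) (w : V) :
    inDeg (reverseAlong A p) w ≤ inDeg A w + 1 := by
  have := inDeg_reverseAlong_add_le hp.mem_of_mem_listArcs w
  have := card_filter_listArcs_fst_le_one hp.2.2.2.1 w
  omega

theorem IsDipath.inDeg_reverseAlong_lt (hp : IsDipath A u v p) (huv : u ≠ v) :
    inDeg (reverseAlong A p) v < inDeg A v := by
  have hle := inDeg_reverseAlong_add_le hp.mem_of_mem_listArcs v
  obtain ⟨-, hhead, hlast, hnodup, -⟩ := hp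
  have hout : (listArcs p).toFinset.filter (·.1 = v) = ∅ := by
    refine Finset.filter_eq_empty_iff.2 ?_
    rintro ⟨a, b⟩ hab rfl
    exact notMem_listArcs_of_getLast? hnodup hlast b (List.mem_toFinset.1 hab)
  obtain ⟨a, ha⟩ := exists_mem_listArcs_of_mem (List.mem_of_mem_getLast? hlast)
    (by rw [hhead]; exact (Option.some_injective _).ne huv)
  have hin : 0 < ((listArcs p).toFinset.filter (·.2 = v)).card :=
    Finset.card_pos.2 ⟨(a, v), by simpa using ha⟩
  rw [hout, Finset.card_empty] at hle
  omega

end Indegree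

theorem List.sum_map_pow_lt_pow_succ {B a : ℕ} {l : List ℕ} (hlen : l.length < B)
    (hl : ∀ x ∈ l, x ≤ a) : (l.map (B ^ ·)).sum < B ^ (a + 1) :=
  calc (l.map (B ^ ·)).sum
      ≤ l.length * B ^ a := by
        simpa using List.sum_le_card_nsmul (l.map (B ^ ·)) (B ^ a) (by
          simpa using fun x hx => Nat.pow_le_pow_right (by omega) (hl x hx))
    _ < B * B ^ a := Nat.mul_lt_mul_of_pos_right hlen (Nat.pow_pos (by omega))
    _ = B ^ (a + 1) := by rw [pow_succ, mul_comm]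

theorem List.lex_lt_of_sum_map_pow_lt {B : ℕ} : ∀ {l l' : List ℕ}, l.Pairwise (· ≥ ·) →
    l'.length = l.length → l.length < B → (l'.map (B ^ ·)).sum < (l.map (B ^ ·)).sum →
    List.Lex (· < ·) l' l
  | [], [], _, _, _, hsum => absurd hsum (lt_irrefl 0)
  | a :: t, a' :: t', hl, hlen, hB, hsum => by
    obtain h | rfl | h := lt_trichotomy a' a
    · exact .rel h
    · simp only [length_cons, map_cons, sum_cons, Nat.add_lt_add_iff_left] at hlen hB hsum
      exact .cons (lex_lt_of_sum_map_pow_lt hl.of_cons (by omega) (by omega) hsum)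
    · refine absurd hsum (not_lt.2 ?_)
      calc ((a :: t).map (B ^ ·)).sum
          ≤ B ^ (a + 1) := (sum_map_pow_lt_pow_succ hB
            (by simpa using fun x hx => List.rel_of_pairwise_cons hl hx)).le
        _ ≤ B ^ a' := Nat.pow_le_pow_right (by omega) h
        _ ≤ ((a' :: t').map (B ^ ·)).sum := by simp

section DegreeSequence

variable [Fintype V] [DecidableEq V]

theorem length_degSeq (A : Finset (V × V)) : (degSeq V A).length = Fintype.card V := by
  simp [degSeq, Finset.card_univ]

theorem pairwise_degSeq (A : Finset (V × V)) : (degSeq V A).Pairwise (· ≥ ·) :=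
  List.pairwise_reverse.2 (Multiset.pairwise_sort _ _)

theorem sum_map_pow_degSeq (B : ℕ) (A : Finset (V × V)) :
    ((degSeq V A).map (B ^ ·)).sum = ∑ w, B ^ inDeg A w := by
  rw [degSeq, List.map_reverse, List.sum_reverse, ← Multiset.sum_coe, ← Multiset.map_coe,
    Multiset.sort_eq, Multiset.map_map]
  rfl

theorem degSeq_lex_lt_of_sum_pow_lt {A A' : Finset (V × V)}
    (h : ∑ w, (Fintype.card V + 1) ^ inDeg A' w < ∑ w, (Fintype.card V + 1) ^ inDeg A w) :
    List.Lex (· < ·) (degSeq V A') (degSeq V A) := by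
  refine List.lex_lt_of_sum_map_pow_lt (B := Fintype.card V + 1) (pairwise_degSeq A) ?_ ?_ ?_
  · rw [length_degSeq, length_degSeq]
  · rw [length_degSeq]; omega
  · rwa [sum_map_pow_degSeq, sum_map_pow_degSeq]

theorem Fintype.sum_pow_lt_sum_pow {B : ℕ} (hB : 2 < B) {f g : V → ℕ} {u v : V} (huv : u ≠ v)
    (hle : ∀ w, w ≠ u → w ≠ v → g w ≤ f w) (hu : g u < f v) (hv : g v < f v) :
    ∑ w, B ^ g w < ∑ w, B ^ f w := by
  have hv' : v ∈ Finset.univ.erase u := Finset.mem_erase.2 ⟨huv.symm, Finset.mem_univ v⟩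
  simp only [← Finset.add_sum_erase _ _ (Finset.mem_univ u), ← Finset.add_sum_erase _ _ hv',
    ← add_assoc]
  refine add_lt_add_of_lt_of_le ?_ (Finset.sum_le_sum fun w hw => ?_)
  · obtain ⟨k, hk⟩ : ∃ k, f v = k + 1 := ⟨f v - 1, by omega⟩
    calc B ^ g u + B ^ g v
        ≤ B ^ k + B ^ k := by gcongr <;> omega
      _ < B ^ (k + 1) := by rw [pow_succ]; nlinarith [pow_pos (by omega : 0 < B) k]
      _ ≤ B ^ f u + B ^ f v := by rw [hk]; omega
  · simp only [Finset.mem_erase] at hw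
    exact Nat.pow_le_pow_right (by omega) (hle w hw.2.1 hw.1)

end DegreeSequence

end

/-- Reversing a strongly reversible directed path (from `u` to `v` with
`d⁻(u) < d⁻(v) - 1` and `u` two-reaching `v`) in a strongly connected digraph keeps the
digraph strongly connected and strictly decreases the indegree sequence in lexicographic
order. -/
theorem stmt_12 {V : Type*} [Fintype V] [DecidableEq V] (A : Finset (V × V))
    (hsc : StronglyConnected A) (u v : V) (p : List V) (hp : IsDipath A u v p)
    (hdeg : inDeg A u + 1 < inDeg A v) (h2 : TwoReaches A u v) :
    StronglyConnected (reverseAlong A p) ∧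
      List.Lex (· < ·) (degSeq V (reverseAlong A p)) (degSeq V A) := by
  have huv : u ≠ v := by rintro rfl; omega
  have hB : 2 < Fintype.card V + 1 := by
    have := Fintype.one_lt_card_iff.2 ⟨u, v, huv⟩
    omega
  refine ⟨stronglyConnected_reverseAlong hsc hp.2.1 hp.2.2.1 h2, degSeq_lex_lt_of_sum_pow_lt ?_⟩
  refine Fintype.sum_pow_lt_sum_pow hB huv (fun w hwu _ => hp.inDeg_reverseAlong_le hwu) ?_
    (hp.inDeg_reverseAlong_lt huv)
  have := hp.inDeg_reverseAlong_le_add_one u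
  omega
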